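/- Let Λ be a finitely aligned P-graph and F ⊆ Λ a finite subset. Then ∨F := ⋃_{G⊆F} MCE(G) is the smallest subset of Λ containing F and closed under taking minimal common extensions; in particular ∨F is finite. -/

import Mathlib

universe u

/-- A quasi-lattice ordered group in the sense of Nica: a (discrete) group `G` together
with a subsemigroup `P` containing the identity with `P ∩ P⁻¹ = {1}`, such that under the
partial order `p ≤ q ↔ p⁻¹ * q ∈ P`, any pair of elements of `G` with a common upper bound
in `P` has a least common upper bound in `P`. -/
structure QLOGroup (G : Type u) [Group G] where
  P : Set G
  one_mem : (1 : G) ∈ P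
  mul_mem : ∀ {p q : G}, p ∈ P → q ∈ P → p * q ∈ P
  eq_one_of_mem_inv_mem : ∀ p : G, p ∈ P → p⁻¹ ∈ P → p = 1
  lub_exists : ∀ p q : G, (∃ r ∈ P, p⁻¹ * r ∈ P ∧ q⁻¹ * r ∈ P) →
    ∃ r ∈ P, p⁻¹ * r ∈ P ∧ q⁻¹ * r ∈ P ∧
      ∀ s ∈ P, p⁻¹ * s ∈ P → q⁻¹ * s ∈ P → r⁻¹ * s ∈ P

namespace QLOGroup

variable {G : Type u} [Group G]

/-- The left-invariant partial order on `G` induced by `P`. -/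
def le (Q : QLOGroup G) (p q : G) : Prop := p⁻¹ * q ∈ Q.P

/-- `s` is the least common upper bound in `P` of `p` and `q` (i.e. `s = p ∨ q < ∞`). -/
def IsLub (Q : QLOGroup G) (p q s : G) : Prop :=
  s ∈ Q.P ∧ Q.le p s ∧ Q.le q s ∧ ∀ t ∈ Q.P, Q.le p t → Q.le q t → Q.le s t

/-- `s` is the least upper bound in `P` of the set `A` (i.e. `s = ∨A < ∞`). -/
def IsLubSet (Q : QLOGroup G) (A : Set G) (s : G) : Prop :=
  s ∈ Q.P ∧ (∀ a ∈ A, Q.le a s) ∧ ∀ t ∈ Q.P, (∀ a ∈ A, Q.le a t) → Q.le s t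

/-- `p` and `q` have a common upper bound in `P` (i.e. `p ∨ q < ∞`). -/
def HasLub (Q : QLOGroup G) (p q : G) : Prop := ∃ s, Q.IsLub p q s

/-- A subset `F` is `∨`-closed if whenever `p, q ∈ F` have `p ∨ q < ∞`, then `p ∨ q ∈ F`. -/
def VeeClosed (Q : QLOGroup G) (F : Set G) : Prop :=
  ∀ p ∈ F, ∀ q ∈ F, ∀ s, Q.IsLub p q s → s ∈ F

/-- `F̄ = {∨A : A ⊆ F, A ≠ ∅, ∨A ≠ ∞}`. -/
def veeClosure (Q : QLOGroup G) (F : Set G) : Set G :=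
  {s | ∃ A ⊆ F, A.Nonempty ∧ Q.IsLubSet A s}

end QLOGroup

/-- A `P`-graph for a quasi-lattice ordered group `(G,P)`: a countable category with a
degree functor `d` into `P` satisfying the unique factorisation property.  Composition is
written in the path order of Raeburn-Sims: `comp μ ν` is defined when `s(μ) = r(ν)` (with
`src = s = dom` and `tgt = r = cod`), and `comp` is a total function whose axioms are only
imposed on composable pairs. -/
structure PGraph {G : Type u} [Group G] (Q : QLOGroup G) where
  Obj : Type
  Mor : Type
  countable_mor : Countable Mor
  src : Mor → Obj
  tgt : Mor → Obj
  ident : Obj → Mor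
  comp : Mor → Mor → Mor
  src_ident : ∀ v, src (ident v) = v
  tgt_ident : ∀ v, tgt (ident v) = v
  src_comp : ∀ μ ν, src μ = tgt ν → src (comp μ ν) = src ν
  tgt_comp : ∀ μ ν, src μ = tgt ν → tgt (comp μ ν) = tgt μ
  id_comp : ∀ μ, comp (ident (tgt μ)) μ = μ
  comp_id : ∀ μ, comp μ (ident (src μ)) = μ
  comp_assoc : ∀ μ ν ρ, src μ = tgt ν → src ν = tgt ρ →
    comp (comp μ ν) ρ = comp μ (comp ν ρ)
  d : Mor → G
  d_mem : ∀ μ, d μ ∈ Q.P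
  d_ident : ∀ v, d (ident v) = 1
  d_comp : ∀ μ ν, src μ = tgt ν → d (comp μ ν) = d μ * d ν
  factorisation : ∀ (lam : Mor) (p q : G), p ∈ Q.P → q ∈ Q.P → d lam = p * q →
    ∃! mn : Mor × Mor, src mn.1 = tgt mn.2 ∧ lam = comp mn.1 mn.2 ∧ d mn.1 = p ∧ d mn.2 = q

namespace PGraph

variable {G : Type u} [Group G] {Q : QLOGroup G} (Λ : PGraph Q)

/-- The prefix order: `λ ⪯ μ` iff `μ = λμ'` for some `μ'`. -/
def PrefixLe (lam mu : Λ.Mor) : Prop :=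
  ∃ tail, Λ.src lam = Λ.tgt tail ∧ mu = Λ.comp lam tail

/-- The set of minimal common extensions of `μ` and `ν`. -/
def MCE (mu nu : Λ.Mor) : Set Λ.Mor :=
  {lam | Λ.PrefixLe mu lam ∧ Λ.PrefixLe nu lam ∧ Q.IsLub (Λ.d mu) (Λ.d nu) (Λ.d lam)}

/-- `Λ` is finitely aligned if all the sets `MCE(μ,ν)` are finite. -/
def FinitelyAligned : Prop := ∀ mu nu : Λ.Mor, (Λ.MCE mu nu).Finite

/-- A filter of `Λ`: a nonempty subset that is downward closed (F1) and upward
directed (F2) for the prefix order. -/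
def IsGraphFilter (U : Set Λ.Mor) : Prop :=
  U.Nonempty ∧ (∀ mu ∈ U, ∀ lam, Λ.PrefixLe lam mu → lam ∈ U) ∧
    (∀ mu ∈ U, ∀ nu ∈ U, ∃ lam ∈ U, Λ.PrefixLe mu lam ∧ Λ.PrefixLe nu lam)

/-- An ultrafilter of `Λ`: a filter maximal under inclusion. -/
def IsGraphUltrafilter (U : Set Λ.Mor) : Prop :=
  Λ.IsGraphFilter U ∧ ∀ V, Λ.IsGraphFilter V → U ⊆ V → U = V

/-- `λ·U = ⋃_{μ ∈ U} {α : α ⪯ λμ}`. -/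
def actFwd (lam : Λ.Mor) (U : Set Λ.Mor) : Set Λ.Mor :=
  {a | ∃ mu ∈ U, Λ.PrefixLe a (Λ.comp lam mu)}

/-- `λ*·V = {μ : λμ ∈ V}`. -/
def actBwd (lam : Λ.Mor) (V : Set Λ.Mor) : Set Λ.Mor :=
  {mu | Λ.src lam = Λ.tgt mu ∧ Λ.comp lam mu ∈ V}

/-- `(μ,ν)` is a balanced pair: `s(μ) = s(ν)` and `d(μ) = d(ν)`. -/
def Balanced (mu nu : Λ.Mor) : Prop := Λ.src mu = Λ.src nu ∧ Λ.d mu = Λ.d nu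

/-- The pairs `(α,β)` with `να = ξβ ∈ MCE(ν,ξ)`. -/
def MCEpairs (nu xi : Λ.Mor) : Set (Λ.Mor × Λ.Mor) :=
  {p | Λ.src nu = Λ.tgt p.1 ∧ Λ.src xi = Λ.tgt p.2 ∧
    Λ.comp nu p.1 = Λ.comp xi p.2 ∧ Λ.comp nu p.1 ∈ Λ.MCE nu xi}

end PGraph

/-- `MCE(S)` for a set `S` of paths: common extensions of all elements of `S` whose degree
is the least upper bound `⋁_{μ ∈ S} d(μ)`. -/
def PGraph.MCEset {G : Type u} [Group G] {Q : QLOGroup G} (Λ : PGraph Q)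
    (S : Set Λ.Mor) : Set Λ.Mor :=
  {lam | (∀ mu ∈ S, Λ.PrefixLe mu lam) ∧ Q.IsLubSet (Λ.d '' S) (Λ.d lam)}

/-- `∨F = ⋃_{∅ ≠ S ⊆ F} MCE(S)`. -/
def PGraph.veeSet {G : Type u} [Group G] {Q : QLOGroup G} (Λ : PGraph Q)
    (F : Set Λ.Mor) : Set Λ.Mor :=
  {lam | ∃ S : Set Λ.Mor, S ⊆ F ∧ S.Nonempty ∧ lam ∈ Λ.MCEset S}

/-!
`MCE(S ∪ {μ})` is contained in the union of the sets `MCE(λ, μ)` with `λ ∈ MCE(S)`: factor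
`λ' ∈ MCE(S ∪ {μ})` as `λ' = λ λ''` with `d(λ) = ⋁ d(S)`; unique factorisation makes `λ` a common
extension of `S`. By induction on `|S|`, each `MCE(S)` is therefore finite and lies in every
MCE-closed set containing `S`. Conversely an MCE of `λ₁ ∈ MCE(S₁)` and `λ₂ ∈ MCE(S₂)` lies in
`MCE(S₁ ∪ S₂)`, so `∨F` is itself MCE-closed.
-/

namespace QLOGroup

variable {G : Type u} [Group G] (Q : QLOGroup G)

theorem le_refl (p : G) : Q.le p p := by
  simpa [le] using Q.one_mem

theorem le_trans {p q r : G} (hpq : Q.le p q) (hqr : Q.le q r) : Q.le p r := by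
  simpa [le, mul_assoc] using Q.mul_mem hpq hqr

theorem le_antisymm {p q : G} (hpq : Q.le p q) (hqp : Q.le q p) : p = q := by
  have hinv : (p⁻¹ * q)⁻¹ ∈ Q.P := by simpa [le] using hqp
  exact inv_mul_eq_one.mp (Q.eq_one_of_mem_inv_mem _ hpq hinv)

theorem isLubSet_empty : Q.IsLubSet ∅ 1 :=
  ⟨Q.one_mem, by simp, fun t ht _ => by simpa [le] using ht⟩

variable {Q}

theorem isLubSet_singleton_iff {a s : G} (ha : a ∈ Q.P) : Q.IsLubSet {a} s ↔ s = a := by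
  constructor
  · rintro ⟨-, hub, hleast⟩
    exact Q.le_antisymm (hleast a ha (by simp [Q.le_refl])) (hub a rfl)
  · rintro rfl
    exact ⟨ha, by simp [Q.le_refl], fun t _ hub => hub s rfl⟩

namespace IsLubSet

variable {A B : Set G} {a b s r : G}

theorem isLub_of_insert (hs : Q.IsLubSet A s) (hr : Q.IsLubSet (insert b A) r) :
    Q.IsLub s b r := by
  refine ⟨hr.1, hs.2.2 r hr.1 fun x hx => hr.2.1 x (.inr hx), hr.2.1 b (.inl rfl), ?_⟩
  rintro t ht hst hbt
  refine hr.2.2 t ht ?_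
  rintro x (rfl | hx)
  exacts [hbt, Q.le_trans (hs.2.1 x hx) hst]

theorem insert (hs : Q.IsLubSet A s) (hr : Q.IsLub b s r) : Q.IsLubSet (insert b A) r := by
  refine ⟨hr.1, ?_, fun t ht hub => hr.2.2.2 t ht (hub b (.inl rfl)) ?_⟩
  · rintro x (rfl | hx)
    exacts [hr.2.1, Q.le_trans (hs.2.1 x hx) hr.2.2.1]
  · exact hs.2.2 t ht fun x hx => hub x (.inr hx)

theorem union (ha : Q.IsLubSet A a) (hb : Q.IsLubSet B b) (hr : Q.IsLub a b r) :
    Q.IsLubSet (A ∪ B) r := by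
  refine ⟨hr.1, ?_, fun t ht hub => hr.2.2.2 t ht ?_ ?_⟩
  · rintro x (hx | hx)
    exacts [Q.le_trans (ha.2.1 x hx) hr.2.1, Q.le_trans (hb.2.1 x hx) hr.2.2.1]
  · exact ha.2.2 t ht fun x hx => hub x (.inl hx)
  · exact hb.2.2 t ht fun x hx => hub x (.inr hx)

end IsLubSet

theorem exists_isLubSet {A : Set G} (hA : A.Finite) {t : G} (ht : t ∈ Q.P)
    (hub : ∀ a ∈ A, Q.le a t) : ∃ s, Q.IsLubSet A s := by
  induction A, hA using Set.Finite.induction_on with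
  | empty => exact ⟨1, Q.isLubSet_empty⟩
  | @insert b A _ _ ih =>
    obtain ⟨s, hs⟩ := ih fun a ha => hub a (.inr ha)
    have hst : Q.le s t := hs.2.2 t ht fun a ha => hub a (.inr ha)
    obtain ⟨r, hr⟩ := Q.lub_exists b s ⟨t, ht, hub b (.inl rfl), hst⟩
    exact ⟨r, hs.insert hr⟩

end QLOGroup

namespace PGraph

variable {G : Type u} [Group G] {Q : QLOGroup G} (Λ : PGraph Q)

def MCEClosed (K : Set Λ.Mor) : Prop :=
  ∀ mu ∈ K, ∀ nu ∈ K, Λ.MCE mu nu ⊆ K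

variable {Λ}

theorem eq_of_comp_eq_comp {a b a' b' : Λ.Mor} (hab : Λ.src a = Λ.tgt b)
    (hab' : Λ.src a' = Λ.tgt b') (h : Λ.comp a b = Λ.comp a' b') (hd : Λ.d a = Λ.d a') :
    a = a' ∧ b = b' := by
  have hdb : Λ.d b = Λ.d b' := by
    have := Λ.d_comp a' b' hab'
    rw [← h, Λ.d_comp a b hab, hd] at this
    exact mul_left_cancel this
  obtain ⟨_, _, huniq⟩ := Λ.factorisation (Λ.comp a b) (Λ.d a) (Λ.d b) (Λ.d_mem a)
    (Λ.d_mem b) (Λ.d_comp a b hab)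
  exact Prod.ext_iff.mp <| (huniq (a, b) ⟨hab, rfl, rfl, rfl⟩).trans
    (huniq (a', b') ⟨hab', h, hd.symm, hdb.symm⟩).symm

theorem prefixLe_refl (mu : Λ.Mor) : Λ.PrefixLe mu mu :=
  ⟨Λ.ident (Λ.src mu), (Λ.tgt_ident _).symm, (Λ.comp_id mu).symm⟩

theorem PrefixLe.trans {mu nu lam : Λ.Mor} (h₁ : Λ.PrefixLe mu nu) (h₂ : Λ.PrefixLe nu lam) :
    Λ.PrefixLe mu lam := by
  obtain ⟨t₁, ht₁, rfl⟩ := h₁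
  obtain ⟨t₂, ht₂, rfl⟩ := h₂
  have ht : Λ.src t₁ = Λ.tgt t₂ := by rwa [Λ.src_comp mu t₁ ht₁] at ht₂
  exact ⟨Λ.comp t₁ t₂, by rw [Λ.tgt_comp t₁ t₂ ht, ht₁], Λ.comp_assoc mu t₁ t₂ ht₁ ht⟩

theorem PrefixLe.d_le {mu lam : Λ.Mor} (h : Λ.PrefixLe mu lam) : Q.le (Λ.d mu) (Λ.d lam) := by
  obtain ⟨t, ht, rfl⟩ := h
  simpa [QLOGroup.le, Λ.d_comp mu t ht] using Λ.d_mem t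

theorem PrefixLe.eq_of_d_eq {mu lam : Λ.Mor} (h : Λ.PrefixLe mu lam) (hd : Λ.d mu = Λ.d lam) :
    mu = lam := by
  obtain ⟨t, ht, heq⟩ := h
  exact (eq_of_comp_eq_comp ht (Λ.tgt_ident _).symm
    (heq.symm.trans (Λ.comp_id lam).symm) hd).1

theorem PrefixLe.of_comp {lam₁ lam₂ mu : Λ.Mor} (h₁₂ : Λ.src lam₁ = Λ.tgt lam₂)
    (h : Λ.PrefixLe mu (Λ.comp lam₁ lam₂)) (hd : Q.le (Λ.d mu) (Λ.d lam₁)) :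
    Λ.PrefixLe mu lam₁ := by
  obtain ⟨t, ht, heq⟩ := h
  have hdt : Λ.d t = ((Λ.d mu)⁻¹ * Λ.d lam₁) * Λ.d lam₂ := by
    have := Λ.d_comp mu t ht
    rw [← heq, Λ.d_comp lam₁ lam₂ h₁₂] at this
    rw [mul_assoc, this]; group
  obtain ⟨⟨a, b⟩, ⟨hab, rfl, hda, hdb⟩, -⟩ :=
    Λ.factorisation t _ _ hd (Λ.d_mem lam₂) hdt
  have hma : Λ.src mu = Λ.tgt a := by rw [ht, Λ.tgt_comp a b hab]
  have hsplit : Λ.comp lam₁ lam₂ = Λ.comp (Λ.comp mu a) b := by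
    rw [heq, Λ.comp_assoc mu a b hma hab]
  have hd₁ : Λ.d lam₁ = Λ.d (Λ.comp mu a) := by
    rw [Λ.d_comp mu a hma, hda]; group
  exact ⟨a, hma, (eq_of_comp_eq_comp h₁₂ (by rwa [Λ.src_comp mu a hma]) hsplit hd₁).1⟩

variable (Λ)

theorem mceset_singleton (mu : Λ.Mor) : Λ.MCEset {mu} = {mu} := by
  ext lam
  simp only [MCEset, Set.mem_singleton_iff, forall_eq, Set.image_singleton,
    QLOGroup.isLubSet_singleton_iff (Λ.d_mem mu), Set.mem_ofPred_eq]
  constructor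
  · rintro ⟨hpre, hd⟩
    exact (hpre.eq_of_d_eq hd.symm).symm
  · rintro rfl
    exact ⟨prefixLe_refl lam, rfl⟩

variable {Λ}

theorem exists_mem_mce_of_mem_mceset_insert {T : Set Λ.Mor} (hT : T.Finite) {mu lam : Λ.Mor}
    (hlam : lam ∈ Λ.MCEset (insert mu T)) : ∃ lam₁ ∈ Λ.MCEset T, lam ∈ Λ.MCE lam₁ mu := by
  obtain ⟨hpre, hlub⟩ := hlam
  obtain ⟨s, hs⟩ := QLOGroup.exists_isLubSet (hT.image Λ.d) (Λ.d_mem lam)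
    (by rintro _ ⟨nu, hnu, rfl⟩; exact (hpre nu (.inr hnu)).d_le)
  rw [Set.image_insert_eq] at hlub
  have hsd : Q.IsLub s (Λ.d mu) (Λ.d lam) := hs.isLub_of_insert hlub
  obtain ⟨⟨lam₁, lam₂⟩, ⟨h₁₂, hsplit, hd₁, -⟩, -⟩ :=
    Λ.factorisation lam s (s⁻¹ * Λ.d lam) hs.1 hsd.2.1 (by group)
  subst hd₁
  refine ⟨lam₁, ⟨fun nu hnu => ?_, hs⟩, ⟨lam₂, h₁₂, hsplit⟩, hpre mu (.inl rfl), hsd⟩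
  exact PrefixLe.of_comp h₁₂ (hsplit ▸ hpre nu (.inr hnu)) (hs.2.1 _ ⟨nu, hnu, rfl⟩)

theorem finite_mceset_insert (hFA : Λ.FinitelyAligned) {T : Set Λ.Mor} (hT : T.Finite)
    (mu : Λ.Mor) : (Λ.MCEset (insert mu T)).Finite := by
  induction T, hT using Set.Finite.induction_on generalizing mu with
  | empty => simp [mceset_singleton]
  | @insert a T _ hT ih =>
    refine ((ih a).biUnion fun lam₁ _ => hFA lam₁ mu).subset fun lam hlam => ?_
    obtain ⟨lam₁, h₁, h⟩ := exists_mem_mce_of_mem_mceset_insert (hT.insert a) hlam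
    exact Set.mem_biUnion h₁ h

theorem mceset_insert_subset {K : Set Λ.Mor} (hK : Λ.MCEClosed K) {T : Set Λ.Mor}
    (hT : T.Finite) {mu : Λ.Mor} (hTK : insert mu T ⊆ K) : Λ.MCEset (insert mu T) ⊆ K := by
  induction T, hT using Set.Finite.induction_on generalizing mu with
  | empty => simpa [mceset_singleton] using hTK
  | @insert a T _ hT ih =>
    intro lam hlam
    obtain ⟨lam₁, h₁, h⟩ := exists_mem_mce_of_mem_mceset_insert (hT.insert a) hlam
    have hK₁ : lam₁ ∈ K := ih ((Set.subset_insert mu _).trans hTK) h₁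
    exact hK lam₁ hK₁ mu (hTK (.inl rfl)) h

theorem mem_mceset_union {S₁ S₂ : Set Λ.Mor} {mu nu lam : Λ.Mor} (hmu : mu ∈ Λ.MCEset S₁)
    (hnu : nu ∈ Λ.MCEset S₂) (hlam : lam ∈ Λ.MCE mu nu) : lam ∈ Λ.MCEset (S₁ ∪ S₂) := by
  refine ⟨?_, Set.image_union Λ.d S₁ S₂ ▸ hmu.2.union hnu.2 hlam.2.2⟩
  rintro x (hx | hx)
  exacts [(hmu.1 x hx).trans hlam.1, (hnu.1 x hx).trans hlam.2.1]

theorem subset_veeSet (F : Set Λ.Mor) : F ⊆ Λ.veeSet F := fun mu hmu =>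
  ⟨{mu}, Set.singleton_subset_iff.mpr hmu, Set.singleton_nonempty mu,
    (Λ.mceset_singleton mu).symm ▸ rfl⟩

theorem mceClosed_veeSet (F : Set Λ.Mor) : Λ.MCEClosed (Λ.veeSet F) := by
  rintro mu ⟨S₁, hS₁F, hS₁, hmu⟩ nu ⟨S₂, hS₂F, -, hnu⟩ lam hlam
  exact ⟨S₁ ∪ S₂, Set.union_subset hS₁F hS₂F, hS₁.mono Set.subset_union_left,
    mem_mceset_union hmu hnu hlam⟩

theorem veeSet_subset {F K : Set Λ.Mor} (hF : F.Finite) (hFK : F ⊆ K) (hK : Λ.MCEClosed K) :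
    Λ.veeSet F ⊆ K := by
  rintro lam ⟨S, hSF, ⟨mu, hmu⟩, hlam⟩
  rw [← Set.insert_eq_of_mem hmu] at hlam
  exact mceset_insert_subset hK (hF.subset hSF)
    (Set.insert_subset (hFK (hSF hmu)) (hSF.trans hFK)) hlam

theorem finite_veeSet (hFA : Λ.FinitelyAligned) {F : Set Λ.Mor} (hF : F.Finite) :
    (Λ.veeSet F).Finite := by
  have hindex : {S | S ⊆ F ∧ S.Nonempty}.Finite := hF.finite_subsets.subset fun S hS => hS.1
  refine (hindex.biUnion fun S hS => ?_).subset
    fun lam ⟨S, hSF, hS, hlam⟩ => Set.mem_biUnion ⟨hSF, hS⟩ hlam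
  obtain ⟨mu, hmu⟩ := hS.2
  rw [← Set.insert_eq_of_mem hmu]
  exact finite_mceset_insert hFA (hF.subset hS.1) mu

end PGraph

/-- For a finite subset `F` of a finitely aligned `P`-graph,
`∨F = ⋃_{S ⊆ F} MCE(S)` is the smallest subset of `Λ` containing `F` and closed under
taking minimal common extensions; in particular `∨F` is finite. -/
theorem stmt16 {G : Type u} [Group G] {Q : QLOGroup G} (Λ : PGraph Q)
    (hFA : Λ.FinitelyAligned) (F : Set Λ.Mor) (hF : F.Finite) :
    F ⊆ Λ.veeSet F ∧
    (∀ mu ∈ Λ.veeSet F, ∀ nu ∈ Λ.veeSet F, Λ.MCE mu nu ⊆ Λ.veeSet F) ∧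
    (∀ K : Set Λ.Mor, F ⊆ K → (∀ mu ∈ K, ∀ nu ∈ K, Λ.MCE mu nu ⊆ K) →
      Λ.veeSet F ⊆ K) ∧
    (Λ.veeSet F).Finite :=
  ⟨Λ.subset_veeSet F, Λ.mceClosed_veeSet F, fun _ hFK hK => Λ.veeSet_subset hF hFK hK,
    Λ.finite_veeSet hFA hF⟩
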